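/- arXiv:2405.13763 — 3 statements merged into one kernel-verified Lean document; each statement's English description precedes it below -/
import Mathlib

section
/- Let n ≥ 1, b ≥ 1, k ≥ 1 be integers with k·b ≤ n, and let M be the n×n real lower triangular Toeplitz matrix with (M)[i,j] = m_{i−j} for i ≥ j and 0 otherwise, where m_0 ≥ m_1 ≥ … ≥ m_{n−1} ≥ 0. Then max_{π ∈ Π_{k,b}} Σ_{i∈π} Σ_{j∈π} (MᵀM)[i,j] = ‖Σ_{j=0}^{k−1} M_{[·, jb]}‖², where M_{[·, jb]} denotes the (jb)-th column of M; moreover this common value equals Σ_{i=0}^{n−1} ( Σ_{j=0}^{min(k−1, ⌊i/b⌋)} m_{i−jb} )². -/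
open Finset Matrix

/-!
For `a ≤ c`, the `(a, c)` entry of `MᵀM` is `∑_{s < n - c} m (s + (c - a)) * m s`. Since `m` is
nonnegative and decreasing, this entry is nonnegative and only grows when the gap `c - a` shrinks
or when `c` decreases. If `π = {p₀ < … < p_{l-1}}` is `b`-separated, then `p_u ≥ u b` and
`p_u - p_t ≥ (u - t) b`, so the entry at `(p_t, p_u)` is dominated by the entry at `(t b, u b)`.
Summing, and using nonnegativity to pass from `l ≤ k` to `k` indices, the sum over `π` is at most
the sum over `{0, b, …, (k - 1) b}`, which is the squared norm of the sum of those columns.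
-/

theorem Matrix.sum_sum_transpose_mul_self_apply {ι κ R : Type*} [Fintype ι] [CommSemiring R]
    (A : Matrix ι κ R) (s : Finset κ) :
    ∑ j ∈ s, ∑ j' ∈ s, (Aᵀ * A) j j' = ∑ i : ι, (∑ j ∈ s, A i j) ^ 2 := by
  simp only [mul_apply, transpose_apply, sq, Finset.sum_mul_sum]
  calc _ = ∑ j ∈ s, ∑ i : ι, ∑ j' ∈ s, A i j * A i j' :=
        sum_congr rfl fun _ _ => Finset.sum_comm
    _ = _ := Finset.sum_comm

theorem Finset.orderEmbOfFin_add_mul_le {s : Finset ℕ} {b : ℕ}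
    (hs : ∀ i ∈ s, ∀ j ∈ s, i ≠ j → b ≤ Nat.dist i j) {t u : Fin s.card} (htu : t ≤ u) :
    s.orderEmbOfFin rfl t + (u - t : ℕ) * b ≤ s.orderEmbOfFin rfl u := by
  obtain ⟨d, hd⟩ := Nat.exists_eq_add_of_le (Fin.le_def.1 htu)
  induction d generalizing u with
  | zero => simp [Fin.ext (hd.trans (add_zero _))]
  | succ d ih =>
    let v : Fin s.card := ⟨t + d, by omega⟩
    have htv : s.orderEmbOfFin rfl t + d * b ≤ s.orderEmbOfFin rfl v := by
      simpa [v] using ih (u := v) (Fin.le_def.2 (by simp [v])) rfl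
    have hvu : s.orderEmbOfFin rfl v < s.orderEmbOfFin rfl u :=
      (s.orderEmbOfFin rfl).strictMono (Fin.lt_def.2 (by simp [v]; omega))
    have hgap := hs _ (s.orderEmbOfFin_mem rfl v) _ (s.orderEmbOfFin_mem rfl u) hvu.ne
    rw [Nat.dist_eq_sub_of_le hvu.le] at hgap
    rw [hd, Nat.add_sub_cancel_left, add_one_mul]
    omega

theorem Finset.sum_orderEmbOfFin {α M : Type*} [LinearOrder α] [AddCommMonoid M]
    (s : Finset α) (f : α → M) : ∑ t : Fin s.card, f (s.orderEmbOfFin rfl t) = ∑ i ∈ s, f i := by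
  rw [← sum_coe_sort s f, ← (s.orderIsoOfFin rfl).toEquiv.sum_comp]
  rfl

theorem Finset.sum_range_ite_mul_le {M : Type*} [AddCommMonoid M] {k b : ℕ} (hk : 1 ≤ k)
    (hb : 1 ≤ b) (i : ℕ) (f : ℕ → M) :
    ∑ j ∈ range k, (if j * b ≤ i then f j else 0) = ∑ j ∈ range (min (k - 1) (i / b) + 1), f j := by
  rw [← sum_filter]
  congr 1
  ext j
  simp only [mem_filter, mem_range, ← Nat.le_div_iff_mul_le hb]
  omega

theorem Nat.le_dist_mul_right_of_ne {t u : ℕ} (b : ℕ) (h : t ≠ u) :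
    b ≤ Nat.dist (t * b) (u * b) := by
  rw [Nat.dist_mul_right]
  exact Nat.le_mul_of_pos_left b (Nat.dist_pos_of_ne h)

def lowerToeplitz (n : ℕ) (m : ℕ → ℝ) : Matrix (Fin n) (Fin n) ℝ :=
  of fun i j => if (j : ℕ) ≤ i then m (i - j) else 0

def toeplitzGram (n : ℕ) (m : ℕ → ℝ) (a c : ℕ) : ℝ :=
  ∑ r ∈ range n, (if a ≤ r then m (r - a) else 0) * (if c ≤ r then m (r - c) else 0)

section toeplitzGram

variable {n : ℕ} {m : ℕ → ℝ}

theorem lowerToeplitz_transpose_mul_self_apply (i j : Fin n) :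
    ((lowerToeplitz n m)ᵀ * lowerToeplitz n m) i j = toeplitzGram n m i j :=
  Fin.sum_univ_eq_sum_range
    (fun r => (if (i : ℕ) ≤ r then m (r - i) else 0) * (if (j : ℕ) ≤ r then m (r - j) else 0)) n

theorem toeplitzGram_comm (a c : ℕ) : toeplitzGram n m a c = toeplitzGram n m c a :=
  sum_congr rfl fun _ _ => mul_comm _ _

theorem toeplitzGram_eq_sum_range {a c : ℕ} (hac : a ≤ c) :
    toeplitzGram n m a c = ∑ s ∈ range (n - c), m (s + (c - a)) * m s := by
  rw [toeplitzGram, ← sum_subset fun r hr => mem_range.2 (mem_Ico.1 hr).2, sum_Ico_eq_sum_range]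
  · refine sum_congr rfl fun s _ => ?_
    rw [if_pos (by omega), if_pos (by omega), show c + s - a = s + (c - a) by omega,
      Nat.add_sub_cancel_left]
  · intro r _ hr
    rw [if_neg (show ¬ c ≤ r by simp_all), mul_zero]

theorem toeplitzGram_nonneg (hm0 : ∀ i < n, 0 ≤ m i) (a c : ℕ) : 0 ≤ toeplitzGram n m a c := by
  wlog hac : a ≤ c generalizing a c
  · rw [toeplitzGram_comm]
    exact this c a (by omega)
  rw [toeplitzGram_eq_sum_range hac]
  refine sum_nonneg fun s hs => ?_
  rw [mem_range] at hs
  exact mul_nonneg (hm0 _ (by omega)) (hm0 _ (by omega))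

theorem toeplitzGram_le_toeplitzGram (hm : AntitoneOn m (Set.Iio n)) (hm0 : ∀ i < n, 0 ≤ m i)
    {a c a' c' : ℕ} (hac : a ≤ c) (hac' : a' ≤ c') (hc : c' ≤ c) (hd : c' - a' ≤ c - a) :
    toeplitzGram n m a c ≤ toeplitzGram n m a' c' := by
  rw [toeplitzGram_eq_sum_range hac, toeplitzGram_eq_sum_range hac']
  calc ∑ s ∈ range (n - c), m (s + (c - a)) * m s
      ≤ ∑ s ∈ range (n - c), m (s + (c' - a')) * m s := by
        refine sum_le_sum fun s hs => ?_
        rw [mem_range] at hs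
        refine mul_le_mul_of_nonneg_right ?_ (hm0 _ (by omega))
        exact hm (Set.mem_Iio.2 (by omega)) (Set.mem_Iio.2 (by omega)) (by omega)
    _ ≤ ∑ s ∈ range (n - c'), m (s + (c' - a')) * m s := by
        refine sum_le_sum_of_subset_of_nonneg (range_subset_range.2 (by omega)) fun s hs _ => ?_
        rw [mem_range] at hs
        exact mul_nonneg (hm0 _ (by omega)) (hm0 _ (by omega))

theorem toeplitzGram_orderEmbOfFin_le (hm : AntitoneOn m (Set.Iio n))
    (hm0 : ∀ i < n, 0 ≤ m i) {s : Finset ℕ} {b : ℕ}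
    (hs : ∀ i ∈ s, ∀ j ∈ s, i ≠ j → b ≤ Nat.dist i j) (t u : Fin s.card) :
    toeplitzGram n m (s.orderEmbOfFin rfl t) (s.orderEmbOfFin rfl u) ≤
      toeplitzGram n m (t * b) (u * b) := by
  wlog htu : t ≤ u generalizing t u
  · rw [toeplitzGram_comm, toeplitzGram_comm (t * b)]
    exact this u t (le_of_not_ge htu)
  have hgap := orderEmbOfFin_add_mul_le hs htu
  have hstart :=
    orderEmbOfFin_add_mul_le hs (t := ⟨0, u.pos⟩) (u := u) (Fin.le_def.2 (Nat.zero_le _))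
  rw [Nat.sub_mul] at hgap
  rw [Nat.sub_zero] at hstart
  exact toeplitzGram_le_toeplitzGram hm hm0 ((s.orderEmbOfFin rfl).monotone htu)
    (Nat.mul_le_mul_right b htu) (by omega) (by omega)

theorem sum_sum_toeplitzGram_le_of_separated (hm : AntitoneOn m (Set.Iio n))
    (hm0 : ∀ i < n, 0 ≤ m i) {s : Finset ℕ} {b k : ℕ} (hcard : s.card ≤ k)
    (hs : ∀ i ∈ s, ∀ j ∈ s, i ≠ j → b ≤ Nat.dist i j) :
    ∑ i ∈ s, ∑ j ∈ s, toeplitzGram n m i j ≤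
      ∑ t ∈ range k, ∑ u ∈ range k, toeplitzGram n m (t * b) (u * b) := by
  calc ∑ i ∈ s, ∑ j ∈ s, toeplitzGram n m i j
      = ∑ t : Fin s.card, ∑ u : Fin s.card,
          toeplitzGram n m (s.orderEmbOfFin rfl t) (s.orderEmbOfFin rfl u) := by
        rw [← sum_orderEmbOfFin s (fun i => ∑ j ∈ s, toeplitzGram n m i j)]
        simp only [sum_orderEmbOfFin]
    _ ≤ ∑ t : Fin s.card, ∑ u : Fin s.card, toeplitzGram n m (t * b) (u * b) :=
        sum_le_sum fun t _ => sum_le_sum fun u _ => toeplitzGram_orderEmbOfFin_le hm hm0 hs t u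
    _ = ∑ t ∈ range s.card, ∑ u ∈ range s.card, toeplitzGram n m (t * b) (u * b) := by
        simp only [Finset.sum_range]
    _ ≤ ∑ t ∈ range k, ∑ u ∈ range k, toeplitzGram n m (t * b) (u * b) := by
        have hk := range_subset_range.2 hcard
        refine (sum_le_sum fun t _ => sum_le_sum_of_subset_of_nonneg hk fun u _ _ =>
          toeplitzGram_nonneg hm0 _ _).trans ?_
        exact sum_le_sum_of_subset_of_nonneg hk fun t _ _ =>
          sum_nonneg fun u _ => toeplitzGram_nonneg hm0 _ _

end toeplitzGram

/-- for a lower triangular Toeplitz matrix `M` with decreasing nonnegative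
coefficients, the maximum over `b`-min-separated index sets `π` with `|π| ≤ k` of
`Σ_{i,j∈π} (MᵀM)[i,j]` is attained at `{0, b, …, (k−1)b}`, i.e. it equals the squared
Euclidean norm of `Σ_{j=0}^{k−1} M_{[·,jb]}`, which in turn equals
`Σ_{i=0}^{n−1} (Σ_{j=0}^{min(k−1,⌊i/b⌋)} m_{i−jb})²`. -/
theorem sens_toeplitz_decreasing (n b k : ℕ) (hb : 1 ≤ b) (hk : 1 ≤ k)
    (hkb : k * b ≤ n) (m : ℕ → ℝ)
    (hmono : ∀ i : ℕ, i + 1 ≤ n - 1 → m (i + 1) ≤ m i)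
    (hlast : 0 ≤ m (n - 1)) :
    IsGreatest
      { x : ℝ | ∃ π : Finset (Fin n), π.card ≤ k ∧
          (∀ i ∈ π, ∀ j ∈ π, i ≠ j → b ≤ Nat.dist (i : ℕ) (j : ℕ)) ∧
          x = ∑ i ∈ π, ∑ j ∈ π,
            ((Matrix.of fun i j : Fin n =>
                if (j : ℕ) ≤ (i : ℕ) then m ((i : ℕ) - (j : ℕ)) else 0)ᵀ *
              (Matrix.of fun i j : Fin n =>
                if (j : ℕ) ≤ (i : ℕ) then m ((i : ℕ) - (j : ℕ)) else 0)) i j }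
      (∑ i : Fin n,
        (∑ j : Fin k,
            (Matrix.of fun i j : Fin n =>
              if (j : ℕ) ≤ (i : ℕ) then m ((i : ℕ) - (j : ℕ)) else 0) i
            (⟨(j : ℕ) * b, by
              have h1 : (j : ℕ) + 1 ≤ k := j.isLt
              have h2 : ((j : ℕ) + 1) * b ≤ k * b := Nat.mul_le_mul h1 (le_refl b)
              calc (j : ℕ) * b < (j : ℕ) * b + b := Nat.lt_add_of_pos_right hb
                _ = ((j : ℕ) + 1) * b := by ring
                _ ≤ k * b := h2
                _ ≤ n := hkb⟩ : Fin n)) ^ 2) ∧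
      (∑ i : Fin n,
        (∑ j : Fin k,
            (Matrix.of fun i j : Fin n =>
              if (j : ℕ) ≤ (i : ℕ) then m ((i : ℕ) - (j : ℕ)) else 0) i
            (⟨(j : ℕ) * b, by
              have h1 : (j : ℕ) + 1 ≤ k := j.isLt
              have h2 : ((j : ℕ) + 1) * b ≤ k * b := Nat.mul_le_mul h1 (le_refl b)
              calc (j : ℕ) * b < (j : ℕ) * b + b := Nat.lt_add_of_pos_right hb
                _ = ((j : ℕ) + 1) * b := by ring
                _ ≤ k * b := h2
                _ ≤ n := hkb⟩ : Fin n)) ^ 2) =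
      ∑ i : Fin n,
        (∑ j ∈ Finset.range (min (k - 1) ((i : ℕ) / b) + 1), m ((i : ℕ) - j * b)) ^ 2 := by
  have hm : AntitoneOn m (Set.Iio n) :=
    antitoneOn_of_add_one_le Set.ordConnected_Iio fun i _ _ hi => hmono i (by simp at hi; omega)
  have hm0 : ∀ i < n, 0 ≤ m i := fun i hi =>
    hlast.trans (hm (Set.mem_Iio.2 hi) (Set.mem_Iio.2 (by omega)) (by omega))
  have hM : (of fun i j : Fin n => if (j : ℕ) ≤ (i : ℕ) then m ((i : ℕ) - (j : ℕ)) else 0) =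
      lowerToeplitz n m := rfl
  rw [hM]
  let c : Fin k ↪ Fin n := ⟨fun j => ⟨j * b, (Nat.mul_lt_mul_of_pos_right j.isLt hb).trans_le hkb⟩,
    fun j j' h => Fin.ext (Nat.eq_of_mul_eq_mul_right hb (congrArg Fin.val h))⟩
  have hnorm : ∑ i : Fin n, (∑ j : Fin k, lowerToeplitz n m i (c j)) ^ 2 =
      ∑ i ∈ univ.map c, ∑ j ∈ univ.map c, ((lowerToeplitz n m)ᵀ * lowerToeplitz n m) i j := by
    rw [sum_sum_transpose_mul_self_apply]
    simp only [sum_map]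
  have hcolumns : ∑ i : Fin n, (∑ j : Fin k, lowerToeplitz n m i (c j)) ^ 2 =
      ∑ t ∈ range k, ∑ u ∈ range k, toeplitzGram n m (t * b) (u * b) := by
    simp only [hnorm, sum_map, lowerToeplitz_transpose_mul_self_apply, Finset.sum_range]
    rfl
  refine ⟨⟨⟨univ.map c, by simp, ?_, hnorm⟩, ?_⟩, ?_⟩
  · simp only [mem_map, mem_univ, true_and]
    rintro _ ⟨t, rfl⟩ _ ⟨u, rfl⟩ htu
    exact Nat.le_dist_mul_right_of_ne b fun h => htu (congrArg c (Fin.ext h))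
  · rintro _ ⟨π, hcard, hsep, rfl⟩
    have hbound := sum_sum_toeplitzGram_le_of_separated hm hm0 (s := π.map Fin.valEmbedding) (b := b)
      (by simpa using hcard) (by simpa [Fin.val_inj] using hsep)
    refine le_of_le_of_eq ?_ hcolumns.symm
    simpa [lowerToeplitz_transpose_mul_self_apply] using hbound
  · refine sum_congr rfl fun i _ => congrArg (· ^ 2) ?_
    simp only [lowerToeplitz, of_apply]
    rw [Fin.sum_univ_eq_sum_range (fun j => if j * b ≤ (i : ℕ) then m (i - j * b) else 0),
      sum_range_ite_mul_le hk hb]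
end

section
/- Let 0 ≤ β < α ≤ 1 be real and set c_m = Σ_{i=0}^{m} α^{m−i} r_{m−i} r_i β^i. Then c_0 = 1, and for every integer j ≥ 1: α^j/(2·√(j+1)) ≤ c_j ≤ α^j/((1 − β/α)·√(j+1)). -/
open Finset

/-- `r_m = (1/4^m)·C(2m,m)`. -/
noncomputable def rCoef (m : ℕ) : ℝ := (1 / 4 ^ m) * (Nat.choose (2 * m) m : ℝ)

/-- `c_m = Σ_{i=0}^{m} α^{m−i} r_{m−i} r_i β^i`. -/
noncomputable def cCoef (α β : ℝ) (m : ℕ) : ℝ :=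
  ∑ i ∈ Finset.range (m + 1), α ^ (m - i) * rCoef (m - i) * rCoef i * β ^ i

lemma rCoef_pos (m : ℕ) : 0 < rCoef m := by
  unfold rCoef
  have h : 0 < Nat.choose (2*m) m := Nat.choose_pos (by omega)
  positivity

lemma rCoef_succ (m : ℕ) : rCoef (m+1) = rCoef m * ((2*m+1)/(2*m+2)) := by
  have h := Nat.succ_mul_centralBinom_succ m
  unfold Nat.centralBinom at h
  have h' : ((m:ℝ)+1) * (Nat.choose (2*(m+1)) (m+1) : ℝ)
      = 2*(2*(m:ℝ)+1) * (Nat.choose (2*m) m : ℝ) := by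
    exact_mod_cast congrArg (Nat.cast (R := ℝ)) h
  unfold rCoef
  have h1 : ((m:ℝ)+1) ≠ 0 := by positivity
  field_simp
  rw [pow_succ]
  linear_combination (2*(4:ℝ)^m) * h'

lemma rCoef_sq_upper (m : ℕ) : rCoef m ^ 2 * ((m:ℝ) + 1) ≤ 1 := by
  induction m with
  | zero => simp [rCoef]
  | succ n ih =>
      have hr := rCoef_pos n
      have hrec := rCoef_succ n
      have hne : (2*(n:ℝ)+2) ≠ 0 := by positivity
      rw [hrec]
      have key : (rCoef n * ((2*(n:ℝ)+1)/(2*(n:ℝ)+2))) ^ 2 * ((n:ℝ) + 1 + 1)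
          ≤ rCoef n ^ 2 * ((n:ℝ) + 1) := by
        rw [mul_pow, div_pow, mul_assoc, div_mul_eq_mul_div, ← mul_div_assoc, div_le_iff₀ (by positivity)]
        nlinarith [sq_nonneg (rCoef n)]
      refine le_trans ?_ ih
      push_cast
      push_cast at key
      linarith

lemma rCoef_sq_lower (m : ℕ) (hm : 1 ≤ m) : (1:ℝ)/4 ≤ rCoef m ^ 2 * m := by
  induction m with
  | zero => omega
  | succ n ih =>
      rcases Nat.eq_or_lt_of_le hm with h1 | h1
      · have : n = 0 := by omega
        subst this
        norm_num [rCoef]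
      · have hn : 1 ≤ n := by omega
        have hr := rCoef_pos n
        have hrec := rCoef_succ n
        rw [hrec]
        have key : rCoef n ^ 2 * (n:ℝ)
            ≤ (rCoef n * ((2*(n:ℝ)+1)/(2*(n:ℝ)+2))) ^ 2 * ((n:ℝ) + 1) := by
          rw [mul_pow, div_pow, mul_assoc, div_mul_eq_mul_div, ← mul_div_assoc, le_div_iff₀ (by positivity)]
          nlinarith [sq_nonneg (rCoef n)]
        have := ih hn
        push_cast
        push_cast at key
        linarith

lemma rCoef_le_inv_sqrt (m : ℕ) : rCoef m ≤ 1 / Real.sqrt ((m:ℝ) + 1) := by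
  have hm1 : (0:ℝ) < (m:ℝ) + 1 := by positivity
  have h : rCoef m ^ 2 ≤ 1 / ((m:ℝ) + 1) := by
    rw [le_div_iff₀ hm1]; simpa using rCoef_sq_upper m
  have h2 : rCoef m ≤ Real.sqrt (1 / ((m:ℝ) + 1)) :=
    (Real.le_sqrt (rCoef_pos m).le (by positivity)).2 h
  calc rCoef m ≤ Real.sqrt (1 / ((m:ℝ) + 1)) := h2
    _ = 1 / Real.sqrt ((m:ℝ) + 1) := by
        rw [one_div, one_div, Real.sqrt_inv]

lemma rCoef_ge_inv_sqrt (m : ℕ) : 1 / (2 * Real.sqrt ((m:ℝ) + 1)) ≤ rCoef m := by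
  have hs : (0:ℝ) < Real.sqrt ((m:ℝ) + 1) := Real.sqrt_pos.2 (by positivity)
  rcases Nat.eq_zero_or_pos m with h0 | h1
  · subst h0
    simp [rCoef, Real.sqrt_one]
    norm_num
  · have h := rCoef_sq_lower m h1
    have hhalf : (1:ℝ)/2 ≤ rCoef m * Real.sqrt m := by
      have := Real.sqrt_le_sqrt h
      have e1 : Real.sqrt ((1:ℝ)/4) = 1/2 := by
        rw [show (1/4:ℝ) = (1/2)^2 by norm_num, Real.sqrt_sq (by norm_num)]
      have e2 : Real.sqrt (rCoef m ^ 2 * m) = rCoef m * Real.sqrt m := by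
        rw [Real.sqrt_mul (sq_nonneg _), Real.sqrt_sq (rCoef_pos m).le]
      rw [e1, e2] at this
      exact this
    have hmono : rCoef m * Real.sqrt m ≤ rCoef m * Real.sqrt ((m:ℝ)+1) := by
      have : Real.sqrt (m:ℝ) ≤ Real.sqrt ((m:ℝ)+1) := Real.sqrt_le_sqrt (by linarith)
      exact mul_le_mul_of_nonneg_left this (rCoef_pos m).le
    rw [div_le_iff₀ (by positivity)]
    nlinarith

lemma rCoef_mul_le (a b : ℕ) : rCoef a * rCoef b ≤ 1 / Real.sqrt ((a:ℝ) + b + 1) := by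
  have ha := rCoef_le_inv_sqrt a
  have hb := rCoef_le_inv_sqrt b
  have hsa : (0:ℝ) < Real.sqrt ((a:ℝ) + 1) := Real.sqrt_pos.2 (by positivity)
  have hsb : (0:ℝ) < Real.sqrt ((b:ℝ) + 1) := Real.sqrt_pos.2 (by positivity)
  have h1 : rCoef a * rCoef b ≤ (1 / Real.sqrt ((a:ℝ)+1)) * (1 / Real.sqrt ((b:ℝ)+1)) :=
    mul_le_mul ha hb (rCoef_pos b).le (by positivity)
  have h2 : (1 / Real.sqrt ((a:ℝ)+1)) * (1 / Real.sqrt ((b:ℝ)+1))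
      = 1 / Real.sqrt (((a:ℝ)+1) * ((b:ℝ)+1)) := by
    rw [Real.sqrt_mul (by positivity)]
    field_simp
  have h3 : Real.sqrt ((a:ℝ) + b + 1) ≤ Real.sqrt (((a:ℝ)+1) * ((b:ℝ)+1)) := by
    apply Real.sqrt_le_sqrt
    nlinarith [Nat.cast_nonneg (α := ℝ) a, Nat.cast_nonneg (α := ℝ) b]
  have h4 : 1 / Real.sqrt (((a:ℝ)+1) * ((b:ℝ)+1)) ≤ 1 / Real.sqrt ((a:ℝ) + b + 1) :=
    one_div_le_one_div_of_le (Real.sqrt_pos.2 (by positivity)) h3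
  linarith

/-- `c_0 = 1` and for every `j ≥ 1`,
`α^j/(2√(j+1)) ≤ c_j ≤ α^j/((1 − β/α)·√(j+1))`. -/
theorem cCoef_bounds (α β : ℝ) (hβ : 0 ≤ β) (hβα : β < α) (hα : α ≤ 1) :
    cCoef α β 0 = 1 ∧
      ∀ j : ℕ, 1 ≤ j →
        α ^ j / (2 * Real.sqrt (j + 1)) ≤ cCoef α β j ∧
          cCoef α β j ≤ α ^ j / ((1 - β / α) * Real.sqrt (j + 1)) := by
  have hα0 : 0 < α := lt_of_le_of_lt hβ hβα
  constructor
  · simp [cCoef, rCoef]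
  intro j hj
  have hs : (0:ℝ) < Real.sqrt ((j:ℝ) + 1) := Real.sqrt_pos.2 (by positivity)
  have hq0 : 0 ≤ β / α := div_nonneg hβ hα0.le
  have hq1 : β / α < 1 := (div_lt_one hα0).2 hβα
  have hq : (0:ℝ) < 1 - β / α := by linarith
  constructor
  · -- lower bound
    have hterm : ∀ i ∈ Finset.range (j+1),
        (0:ℝ) ≤ α ^ (j - i) * rCoef (j - i) * rCoef i * β ^ i := by
      intro i _
      exact mul_nonneg (mul_nonneg (mul_nonneg (pow_nonneg hα0.le _)
        (rCoef_pos _).le) (rCoef_pos _).le) (pow_nonneg hβ _)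
    have h0 : α ^ j * rCoef j ≤ cCoef α β j := by
      have := Finset.single_le_sum hterm (Finset.mem_range.2 (Nat.succ_pos j))
      simpa [cCoef, rCoef] using this
    have h1 : α ^ j * (1 / (2 * Real.sqrt ((j:ℝ)+1))) ≤ α ^ j * rCoef j :=
      mul_le_mul_of_nonneg_left (rCoef_ge_inv_sqrt j) (pow_nonneg hα0.le j)
    calc α ^ j / (2 * Real.sqrt ((j:ℝ) + 1))
        = α ^ j * (1 / (2 * Real.sqrt ((j:ℝ)+1))) := by ring
      _ ≤ α ^ j * rCoef j := h1
      _ ≤ cCoef α β j := h0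
  · -- upper bound
    have hstep : cCoef α β j ≤
        ∑ i ∈ Finset.range (j+1), α ^ j * (β/α) ^ i * (1 / Real.sqrt ((j:ℝ)+1)) := by
      apply Finset.sum_le_sum
      intro i hi
      have hij : i ≤ j := by
        have := Finset.mem_range.1 hi; omega
      have e : α ^ (j - i) * β ^ i = α ^ j * (β/α) ^ i := by
        rw [div_pow, pow_sub₀ α hα0.ne' hij]
        field_simp
      have hbd : rCoef (j - i) * rCoef i ≤ 1 / Real.sqrt ((j:ℝ) + 1) := by
        have := rCoef_mul_le (j - i) i
        rwa [show ((j - i : ℕ):ℝ) + i + 1 = (j:ℝ) + 1 by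
          rw [Nat.cast_sub hij]; ring] at this
      calc α ^ (j - i) * rCoef (j - i) * rCoef i * β ^ i
          = (α ^ (j - i) * β ^ i) * (rCoef (j - i) * rCoef i) := by ring
        _ ≤ (α ^ (j - i) * β ^ i) * (1 / Real.sqrt ((j:ℝ) + 1)) := by
            apply mul_le_mul_of_nonneg_left hbd
            exact mul_nonneg (pow_nonneg hα0.le _) (pow_nonneg hβ _)
        _ = α ^ j * (β/α) ^ i * (1 / Real.sqrt ((j:ℝ)+1)) := by rw [e]
    have hsum : ∑ i ∈ Finset.range (j+1), (β/α) ^ i ≤ 1 / (1 - β/α) := by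
      rw [le_div_iff₀ hq]
      have h := geom_sum_mul (β/α) (j+1)
      have h' : (∑ i ∈ Finset.range (j+1), (β/α) ^ i) * (1 - β/α)
          = 1 - (β/α) ^ (j+1) := by linear_combination -h
      have := pow_nonneg hq0 (j+1)
      linarith
    have hcollect : ∑ i ∈ Finset.range (j+1), α ^ j * (β/α) ^ i * (1 / Real.sqrt ((j:ℝ)+1))
        = (α ^ j * (1 / Real.sqrt ((j:ℝ)+1))) * ∑ i ∈ Finset.range (j+1), (β/α) ^ i := by
      rw [Finset.mul_sum]
      apply Finset.sum_congr rfl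
      intro i _; ring
    have hfinal : (α ^ j * (1 / Real.sqrt ((j:ℝ)+1))) * (1 / (1 - β/α))
        = α ^ j / ((1 - β / α) * Real.sqrt ((j:ℝ) + 1)) := by
      field_simp
    calc cCoef α β j ≤ ∑ i ∈ Finset.range (j+1), α ^ j * (β/α) ^ i * (1 / Real.sqrt ((j:ℝ)+1)) := hstep
      _ = (α ^ j * (1 / Real.sqrt ((j:ℝ)+1))) * ∑ i ∈ Finset.range (j+1), (β/α) ^ i := hcollect
      _ ≤ (α ^ j * (1 / Real.sqrt ((j:ℝ)+1))) * (1 / (1 - β/α)) := by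
          apply mul_le_mul_of_nonneg_left hsum
          positivity
      _ = α ^ j / ((1 - β / α) * Real.sqrt ((j:ℝ) + 1)) := hfinal
end

section
/- Let n ≥ 1, 0 ≤ β < α ≤ 1, let b be an integer with 1 ≤ b ≤ n and k an integer with 1 ≤ k ≤ n/b. For any n×n real matrices B and C with B·C = A_{α,β} and all entries of CᵀC nonnegative, the expected approximation error 𝓔(B,C) = (1/√n)·sens_{k,b}(C)·‖B‖_F satisfies: 𝓔(B,C) ≥ √k · log(n+1)/π if α = 1, and 𝓔(B,C) ≥ √k if α < 1. Here log denotes the natural logarithm. -/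
/-!
For any matrix `M` with `‖M x‖₂ ≤ ‖x‖₂`, the Frobenius pairing `⟨M, A⟩ = ⟨M, B C⟩ = ⟨B, M Cᵀ⟩`
is at most `‖B‖_F ‖C‖_F`, so a lower bound `n c ≤ ⟨M, A⟩` bounds `‖B‖_F ‖C‖_F` from below.
On the other side, averaging the diagonal of `CᵀC` over the `n` cyclic shifts of the progression
`{0, b, …, (k-1) b}` and using `CᵀC ≥ 0` gives `sens_{k,b}(C)² ≥ (k / n) ‖C‖_F²`.

For `α < 1` take `M = 1`, since `A` has unit diagonal. For `α = 1` take
`M i j = 1 / (π (i - j + 1/2))`: the integer shifts of `i ↦ 1 / (π (i + 1/2))` are orthonormal in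
`ℓ²(ℤ)` (the cross terms telescope, and `∑ 1 / (i + 1/2)² = π²`), so `M` is a contraction; as
`A i j ≥ 1` on the lower triangle,
`⟨M, A⟩ ≥ π⁻¹ ∑_{m < n} ∑_{d ≤ m} 1 / (d + 1/2) ≥ n log (n + 1) / π`.
-/

open Finset Matrix

/-- `a_m = Σ_{t=0}^{m} α^t β^{m−t}`. -/
noncomputable def aCoef (α β : ℝ) (m : ℕ) : ℝ :=
  ∑ t ∈ Finset.range (m + 1), α ^ t * β ^ (m - t)

/-- The SGD workload matrix `A_{α,β}`. -/
noncomputable def Amat (n : ℕ) (α β : ℝ) : Matrix (Fin n) (Fin n) ℝ :=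
  Matrix.of fun i j => if (j : ℕ) ≤ (i : ℕ) then aCoef α β ((i : ℕ) - (j : ℕ)) else 0

/-- The `b`-min-separated `L2`-sensitivity with at most `k` participations. -/
noncomputable def sens (n b k : ℕ) (C : Matrix (Fin n) (Fin n) ℝ) : ℝ :=
  Real.sqrt (sSup { x : ℝ | ∃ π : Finset (Fin n), π.card ≤ k ∧
    (∀ i ∈ π, ∀ j ∈ π, i ≠ j → b ≤ Nat.dist (i : ℕ) (j : ℕ)) ∧
    x = ∑ i ∈ π, ∑ j ∈ π, (Cᵀ * C) i j })

/-- The Frobenius norm. -/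
noncomputable def frob (n : ℕ) (C : Matrix (Fin n) (Fin n) ℝ) : ℝ :=
  Real.sqrt (∑ i : Fin n, ∑ j : Fin n, (C i j) ^ 2)

open Filter Topology Real

theorem hasSum_sub_add_one_int {E : Type*} [NormedAddCommGroup E] {f : ℤ → E}
    (hs : Summable fun n => f n - f (n + 1))
    (htop : Tendsto f atTop (𝓝 0)) (hbot : Tendsto f atBot (𝓝 0)) :
    HasSum (fun n => f n - f (n + 1)) 0 := by
  have hIco : HasSum (fun n => f n - f (n + 1)) (∑' n, (f n - f (n + 1)))
      (SummationFilter.symmetricIco ℤ) :=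
    hs.hasSum.mono_left (SummationFilter.symmetricIco ℤ).le_atTop
  rw [SummationFilter.hasSum_symmetricIco_int_iff] at hIco
  simp_rw [Finset.sum_Ico_int_sub] at hIco
  have hlim : Tendsto (fun N : ℕ => f (-N) - f N) atTop (𝓝 0) := by
    simpa using (hbot.comp (tendsto_neg_atTop_atBot.comp tendsto_natCast_atTop_atTop)).sub
      (htop.comp tendsto_natCast_atTop_atTop)
  rw [← tendsto_nhds_unique hIco hlim]
  exact hs.hasSum

theorem Summable.mul_of_summable_sq {ι : Type*} {f g : ι → ℝ} (hf : Summable fun i => f i ^ 2)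
    (hg : Summable fun i => g i ^ 2) : Summable fun i => f i * g i :=
  (hf.add hg).of_norm_bounded fun i => by
    rw [norm_mul, Real.norm_eq_abs, Real.norm_eq_abs, ← sq_abs (f i), ← sq_abs (g i)]
    nlinarith [sq_nonneg (|f i| - |g i|), abs_nonneg (f i), abs_nonneg (g i)]

theorem hasSum_inv_add_half_sq : HasSum (fun n : ℕ => ((n : ℝ) + 1 / 2)⁻¹ ^ 2) (π ^ 2 / 2) := by
  have hodd : Summable fun n : ℕ => 1 / ((2 * n + 1 : ℕ) : ℝ) ^ 2 := by
    refine (summable_one_div_nat_pow.mpr one_lt_two).comp_injective (i := fun n => 2 * n + 1) ?_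
    exact fun a b h => by simpa using h
  have heven : HasSum (fun n : ℕ => 1 / ((2 * n : ℕ) : ℝ) ^ 2) (π ^ 2 / 24) := by
    have h := hasSum_zeta_two.mul_left (1 / 4)
    rw [show 1 / 4 * (π ^ 2 / 6) = π ^ 2 / 24 by ring] at h
    refine h.congr_fun fun n => ?_
    push_cast
    ring
  have hodd_val : ∑' n : ℕ, 1 / ((2 * n + 1 : ℕ) : ℝ) ^ 2 = π ^ 2 / 8 := by
    linarith [(HasSum.even_add_odd (f := fun n : ℕ => 1 / (n : ℝ) ^ 2) heven hodd.hasSum).unique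
      hasSum_zeta_two]
  have h := (hodd_val ▸ hodd.hasSum).mul_left 4
  rw [show 4 * (π ^ 2 / 8) = π ^ 2 / 2 by ring] at h
  refine h.congr_fun fun n => ?_
  push_cast
  field_simp
  ring

noncomputable def hilbertKernel (i : ℤ) : ℝ := (π * (i + 1 / 2))⁻¹

namespace hilbertKernel

theorem natCast (d : ℕ) : hilbertKernel d = π⁻¹ * ((d : ℝ) + 1 / 2)⁻¹ := by
  rw [hilbertKernel, mul_inv, Int.cast_natCast]

theorem nonneg_of_nonneg {i : ℤ} (hi : 0 ≤ i) : 0 ≤ hilbertKernel i := by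
  have : (0 : ℝ) ≤ i := by exact_mod_cast hi
  unfold hilbertKernel
  positivity

theorem hasSum_sq : HasSum (fun i => hilbertKernel i ^ 2) 1 := by
  have h : HasSum (fun n : ℕ => π⁻¹ ^ 2 * ((n : ℝ) + 1 / 2)⁻¹ ^ 2) (1 / 2) := by
    have := hasSum_inv_add_half_sq.mul_left (π⁻¹ ^ 2)
    rwa [show π⁻¹ ^ 2 * (π ^ 2 / 2) = 1 / 2 by field_simp] at this
  have hneg := HasSum.of_nat_of_neg_add_one (f := fun i => hilbertKernel i ^ 2)
    (h.congr_fun fun n => by rw [natCast, mul_pow])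
    (h.congr_fun fun n => by
      rw [hilbertKernel, mul_inv, mul_pow]
      push_cast
      rw [show -((n : ℝ) + 1) + 1 / 2 = -((n : ℝ) + 1 / 2) by ring, inv_neg, neg_sq])
  norm_num at hneg
  exact hneg

theorem sub_eq_mul (i d : ℤ) :
    hilbertKernel i - hilbertKernel (i + d) =
      π * d * (hilbertKernel i * hilbertKernel (i + d)) := by
  have half_ne (j : ℤ) : (j : ℝ) + 1 / 2 ≠ 0 := by
    intro h
    have : ((2 * j + 1 : ℤ) : ℝ) = 0 := by push_cast; linarith
    have : 2 * j + 1 = 0 := by exact_mod_cast this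
    omega
  have hi := half_ne i
  have hid := half_ne (i + d)
  simp only [hilbertKernel, Int.cast_add] at hid ⊢
  rw [add_right_comm] at hid ⊢
  generalize (i : ℝ) + 1 / 2 = x at hi hid ⊢
  field_simp
  ring

theorem summable_mul_add (d : ℤ) : Summable fun i => hilbertKernel i * hilbertKernel (i + d) :=
  hasSum_sq.summable.mul_of_summable_sq
    (((Equiv.addRight d).summable_iff (f := fun i => hilbertKernel i ^ 2)).mpr hasSum_sq.summable)

theorem tendsto_atTop : Tendsto hilbertKernel atTop (𝓝 0) :=
  tendsto_inv_atTop_zero.comp <|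
    (tendsto_atTop_add_const_right _ _ tendsto_intCast_atTop_atTop).const_mul_atTop pi_pos

theorem tendsto_atBot : Tendsto hilbertKernel atBot (𝓝 0) :=
  tendsto_inv_atBot_zero.comp <|
    (tendsto_atBot_add_const_right _ _ (tendsto_intCast_atBot_iff.mpr tendsto_id)).const_mul_atBot
      pi_pos

theorem hasSum_sub_add_one : HasSum (fun i => hilbertKernel i - hilbertKernel (i + 1)) 0 :=
  hasSum_sub_add_one_int
    (((summable_mul_add 1).mul_left π).congr fun i => by rw [sub_eq_mul, Int.cast_one, mul_one])
    tendsto_atTop tendsto_atBot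

theorem hasSum_mul_add_of_pos {d : ℤ} (hd : 0 < d) :
    HasSum (fun i => hilbertKernel i * hilbertKernel (i + d)) 0 := by
  lift d to ℕ using hd.le
  have hshift (u : ℕ) : HasSum (fun i => hilbertKernel (i + u) - hilbertKernel (i + u + 1)) 0 :=
    (Equiv.addRight (u : ℤ)).hasSum_iff
      (f := fun i => hilbertKernel i - hilbertKernel (i + 1)) |>.mpr hasSum_sub_add_one
  have htele : HasSum (fun i => hilbertKernel i - hilbertKernel (i + d)) 0 := by
    have hsum : HasSum (fun i => ∑ u ∈ range d, (hilbertKernel (i + u) - hilbertKernel (i + u + 1)))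
        0 := by
      simpa only [sum_const_zero] using hasSum_sum fun u (_ : u ∈ range d) => hshift u
    refine hsum.congr_fun fun i => ?_
    have := Finset.sum_range_sub' (fun u : ℕ => hilbertKernel (i + u)) d
    simp only [Nat.cast_add, Nat.cast_one, Nat.cast_zero, ← add_assoc, add_zero] at this
    exact this.symm
  have hd' : (d : ℝ) ≠ 0 := by exact_mod_cast hd.ne'
  have hscaled : HasSum (fun i => (π * d)⁻¹ * (hilbertKernel i - hilbertKernel (i + d))) 0 := by
    simpa only [mul_zero] using htele.mul_left (π * d)⁻¹
  refine hscaled.congr_fun fun i => ?_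
  rw [sub_eq_mul, Int.cast_natCast]
  field_simp

theorem hasSum_mul_add (d : ℤ) :
    HasSum (fun i => hilbertKernel i * hilbertKernel (i + d)) (if d = 0 then 1 else 0) := by
  rcases lt_trichotomy d 0 with hd | rfl | hd
  · rw [if_neg hd.ne]
    have h := hasSum_mul_add_of_pos (neg_pos.mpr hd)
    refine (Equiv.addRight (-d)).hasSum_iff.mp (h.congr_fun fun i => ?_)
    rw [Function.comp_apply, Equiv.coe_addRight, neg_add_cancel_right, mul_comm]
  · simpa [← sq] using hasSum_sq
  · rw [if_neg hd.ne']
    exact hasSum_mul_add_of_pos hd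

theorem hasSum_sub_mul_sub (a c : ℤ) :
    HasSum (fun i => hilbertKernel (i - a) * hilbertKernel (i - c)) (if a = c then 1 else 0) := by
  have h := hasSum_mul_add (a - c)
  simp only [sub_eq_zero] at h
  exact (Equiv.addRight a).hasSum_iff.mp (h.congr_fun fun i => by
    simp only [Function.comp, Equiv.coe_addRight]
    ring_nf)

end hilbertKernel

def IsL2Contraction {m n : Type*} [Fintype m] [Fintype n] (M : Matrix m n ℝ) : Prop :=
  ∀ x : n → ℝ, ∑ i, (M *ᵥ x) i ^ 2 ≤ ∑ j, x j ^ 2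

theorem isL2Contraction_one {n : Type*} [Fintype n] [DecidableEq n] :
    IsL2Contraction (1 : Matrix n n ℝ) := fun x => by rw [one_mulVec]

theorem sum_sq_le_of_hasSum_mul_eq_ite {ι κ : Type*} [Fintype ι] [DecidableEq ι] {e : ι → κ → ℝ}
    (he : ∀ a c, HasSum (fun i => e a i * e c i) (if a = c then 1 else 0)) (x : ι → ℝ)
    (s : Finset κ) : ∑ i ∈ s, (∑ a, e a i * x a) ^ 2 ≤ ∑ a, x a ^ 2 := by
  have hsq : HasSum (fun i => (∑ a, e a i * x a) ^ 2) (∑ a, x a ^ 2) := by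
    have := hasSum_sum fun a (_ : a ∈ univ) => hasSum_sum fun c (_ : c ∈ univ) =>
      (he a c).mul_left (x a * x c)
    simp only [mul_ite, mul_one, mul_zero, sum_ite_eq, mem_univ, if_true, ← sq] at this
    refine this.congr_fun fun i => ?_
    rw [sq, sum_mul_sum]
    refine sum_congr rfl fun a _ => sum_congr rfl fun c _ => ?_
    ring
  simpa [sq] using sum_le_hasSum s (fun i _ => sq_nonneg _) hsq

noncomputable def hilbertMatrix (n : ℕ) : Matrix (Fin n) (Fin n) ℝ :=
  Matrix.of fun i j => hilbertKernel ((i : ℤ) - (j : ℤ))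

theorem isL2Contraction_hilbertMatrix (n : ℕ) : IsL2Contraction (hilbertMatrix n) := fun x => by
  have := sum_sq_le_of_hasSum_mul_eq_ite (e := fun (j : Fin n) (i : ℤ) => hilbertKernel (i - j))
    (fun a c => by simpa [Fin.val_inj] using hilbertKernel.hasSum_sub_mul_sub a c) x
    (univ.map ⟨fun i : Fin n => ((i : ℕ) : ℤ), fun a b h => by simpa [Fin.val_inj] using h⟩)
  rw [sum_map] at this
  exact this

section Frobenius

variable {n : ℕ}

theorem frob_nonneg (C : Matrix (Fin n) (Fin n) ℝ) : 0 ≤ frob n C := Real.sqrt_nonneg _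

theorem sum_mul_le_frob_mul_frob (B D : Matrix (Fin n) (Fin n) ℝ) :
    ∑ i, ∑ j, B i j * D i j ≤ frob n B * frob n D := by
  simpa only [frob, Fintype.sum_prod_type] using
    Real.sum_mul_le_sqrt_mul_sqrt univ (fun p : Fin n × Fin n => B p.1 p.2) fun p => D p.1 p.2

theorem frob_mul_transpose_le {M : Matrix (Fin n) (Fin n) ℝ} (hM : IsL2Contraction M)
    (C : Matrix (Fin n) (Fin n) ℝ) : frob n (M * Cᵀ) ≤ frob n C := by
  refine Real.sqrt_le_sqrt ?_
  rw [sum_comm]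
  exact sum_le_sum fun l _ => by simpa [mul_apply, mulVec, dotProduct] using hM (C l)

theorem sum_mul_mul_eq_sum_mul_mul_transpose (M B C : Matrix (Fin n) (Fin n) ℝ) :
    ∑ i, ∑ j, M i j * (B * C) i j = ∑ i, ∑ l, B i l * (M * Cᵀ) i l := by
  simp only [mul_apply, transpose_apply, mul_sum]
  refine sum_congr rfl fun i _ => ?_
  rw [sum_comm]
  exact sum_congr rfl fun l _ => sum_congr rfl fun j _ => by ring

theorem sum_mul_mul_le_frob_mul_frob {M : Matrix (Fin n) (Fin n) ℝ} (hM : IsL2Contraction M)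
    (B C : Matrix (Fin n) (Fin n) ℝ) : ∑ i, ∑ j, M i j * (B * C) i j ≤ frob n B * frob n C :=
  calc ∑ i, ∑ j, M i j * (B * C) i j = ∑ i, ∑ l, B i l * (M * Cᵀ) i l :=
        sum_mul_mul_eq_sum_mul_mul_transpose M B C
    _ ≤ frob n B * frob n (M * Cᵀ) := sum_mul_le_frob_mul_frob B _
    _ ≤ frob n B * frob n C :=
        mul_le_mul_of_nonneg_left (frob_mul_transpose_le hM C) (frob_nonneg B)

theorem frob_sq_eq_sum_transpose_mul_self (C : Matrix (Fin n) (Fin n) ℝ) :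
    frob n C ^ 2 = ∑ j, (Cᵀ * C) j j := by
  rw [frob, Real.sq_sqrt (by positivity), sum_comm]
  simp [mul_apply, sq]

end Frobenius

section Sensitivity

variable {n b k : ℕ}

theorem sqrt_le_sens {C : Matrix (Fin n) (Fin n) ℝ} {s : Finset (Fin n)} (hcard : s.card ≤ k)
    (hsep : ∀ i ∈ s, ∀ j ∈ s, i ≠ j → b ≤ Nat.dist i j) :
    √(∑ i ∈ s, ∑ j ∈ s, (Cᵀ * C) i j) ≤ sens n b k C := by
  refine Real.sqrt_le_sqrt (le_csSup ?_ ⟨s, hcard, hsep, rfl⟩)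
  refine ((Set.finite_range fun s : Finset (Fin n) => ∑ i ∈ s, ∑ j ∈ s, (Cᵀ * C) i j).subset
    ?_).bddAbove
  rintro x ⟨s, -, -, rfl⟩
  exact ⟨s, rfl⟩

theorem le_dist_add_mod_add_mod {s p q : ℕ} (hs : s < n) (hpq : p + b ≤ q) (hq : q + b ≤ n) :
    b ≤ Nat.dist ((s + p) % n) ((s + q) % n) := by
  have hmod {u : ℕ} (hu : u < 2 * n) : u % n = u ∨ (n ≤ u ∧ u % n = u - n) := by
    rcases Nat.lt_or_ge u n with h | h
    · exact Or.inl (Nat.mod_eq_of_lt h)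
    · exact Or.inr ⟨h, by rw [Nat.mod_eq_sub_mod h, Nat.mod_eq_of_lt (by omega)]⟩
  have := hmod (u := s + p) (by omega)
  have := hmod (u := s + q) (by omega)
  unfold Nat.dist
  omega

variable [NeZero n]

def cyclicProgression (n b k : ℕ) [NeZero n] (s : Fin n) : Finset (Fin n) :=
  (range k).image fun t => s + Fin.ofNat n (t * b)

theorem le_dist_add_ofNat_mul (hb : 0 < b) (hkb : k * b ≤ n) (s : Fin n) {t₁ t₂ : ℕ} (h₂ : t₂ < k)
    (hlt : t₁ < t₂) :
    b ≤ Nat.dist (s + Fin.ofNat n (t₁ * b) : Fin n) (s + Fin.ofNat n (t₂ * b) : Fin n) := by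
  have h₁ : t₁ * b + b ≤ t₂ * b := by simpa [add_mul] using Nat.mul_le_mul_right b hlt
  have h₂ : t₂ * b + b ≤ n := by simpa [add_mul] using (Nat.mul_le_mul_right b h₂).trans hkb
  rw [Fin.val_add, Fin.val_add, Fin.val_ofNat, Fin.val_ofNat,
    Nat.mod_eq_of_lt (show t₁ * b < n by omega), Nat.mod_eq_of_lt (show t₂ * b < n by omega)]
  exact le_dist_add_mod_add_mod s.isLt h₁ h₂

theorem le_dist_of_mem_cyclicProgression (hb : 0 < b) (hkb : k * b ≤ n) (s : Fin n) :
    ∀ i ∈ cyclicProgression n b k s, ∀ j ∈ cyclicProgression n b k s, i ≠ j →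
      b ≤ Nat.dist i j := by
  simp only [cyclicProgression, mem_image, mem_range]
  rintro _ ⟨t₁, h₁, rfl⟩ _ ⟨t₂, h₂, rfl⟩ hne
  rcases lt_trichotomy t₁ t₂ with hlt | rfl | hlt
  · exact le_dist_add_ofNat_mul hb hkb s h₂ hlt
  · exact absurd rfl hne
  · rw [Nat.dist_comm]
    exact le_dist_add_ofNat_mul hb hkb s h₁ hlt

theorem sum_cyclicProgression (hb : 0 < b) (hkb : k * b ≤ n) (s : Fin n) (w : Fin n → ℝ) :
    ∑ i ∈ cyclicProgression n b k s, w i = ∑ t ∈ range k, w (s + Fin.ofNat n (t * b)) := by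
  refine sum_image fun t₁ h₁ t₂ h₂ heq => ?_
  have key {t t' : ℕ} (ht' : t' ∈ range k) (hlt : t < t')
      (heq : s + Fin.ofNat n (t * b) = s + Fin.ofNat n (t' * b)) : False := by
    have := le_dist_add_ofNat_mul hb hkb s (mem_range.mp ht') hlt
    rw [heq, Nat.dist_self] at this
    omega
  rcases lt_trichotomy t₁ t₂ with hlt | heq' | hlt
  exacts [(key h₂ hlt heq).elim, heq', (key h₁ hlt heq.symm).elim]

theorem exists_le_sum_cyclicProgression (hb : 0 < b) (hkb : k * b ≤ n) (w : Fin n → ℝ) :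
    ∃ s, k / n * ∑ j, w j ≤ ∑ i ∈ cyclicProgression n b k s, w i := by
  have htotal : ∑ s : Fin n, ∑ t ∈ range k, w (s + Fin.ofNat n (t * b)) = k * ∑ j, w j := by
    have hshift (c : Fin n) : ∑ s, w (s + c) = ∑ j, w j := Equiv.sum_comp (Equiv.addRight c) w
    rw [sum_comm]
    simp only [hshift, sum_const, card_range, nsmul_eq_mul]
  have hn : (n : ℝ) ≠ 0 := Nat.cast_ne_zero.mpr (NeZero.ne n)
  obtain ⟨s, -, hs⟩ := exists_le_of_sum_le univ_nonempty <| le_of_eq <|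
    show ∑ _s : Fin n, k / n * ∑ j, w j = _ by
      rw [htotal, sum_const, card_univ, Fintype.card_fin, nsmul_eq_mul]
      field_simp
  exact ⟨s, hs.trans_eq (sum_cyclicProgression hb hkb s w).symm⟩

theorem sqrt_mul_frob_le_sqrt_mul_sens (hb : 0 < b) (hkb : k * b ≤ n)
    {C : Matrix (Fin n) (Fin n) ℝ} (hC : ∀ i j, 0 ≤ (Cᵀ * C) i j) :
    √k * frob n C ≤ √n * sens n b k C := by
  obtain ⟨s, hs⟩ := exists_le_sum_cyclicProgression hb hkb fun j => (Cᵀ * C) j j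
  set P := cyclicProgression n b k s
  have hdiag : ∑ i ∈ P, (Cᵀ * C) i i ≤ ∑ i ∈ P, ∑ j ∈ P, (Cᵀ * C) i j :=
    sum_le_sum fun i hi => single_le_sum (fun j _ => hC i j) hi
  have hn : (0 : ℝ) < n := Nat.cast_pos.mpr (NeZero.pos n)
  have hquad : k * frob n C ^ 2 ≤ n * ∑ i ∈ P, ∑ j ∈ P, (Cᵀ * C) i j :=
    calc k * frob n C ^ 2 = n * (k / n * ∑ j, (Cᵀ * C) j j) := by
          rw [frob_sq_eq_sum_transpose_mul_self]; field_simp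
      _ ≤ n * ∑ i ∈ P, ∑ j ∈ P, (Cᵀ * C) i j := by gcongr; exact hs.trans hdiag
  have hcard : P.card ≤ k := card_image_le.trans (card_range k).le
  calc √k * frob n C = √(k * frob n C ^ 2) := by
        rw [Real.sqrt_mul (Nat.cast_nonneg k), Real.sqrt_sq (frob_nonneg C)]
    _ ≤ √(n * ∑ i ∈ P, ∑ j ∈ P, (Cᵀ * C) i j) := Real.sqrt_le_sqrt hquad
    _ = √n * √(∑ i ∈ P, ∑ j ∈ P, (Cᵀ * C) i j) := Real.sqrt_mul (Nat.cast_nonneg n) _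
    _ ≤ √n * sens n b k C := by
        gcongr
        exact sqrt_le_sens hcard (le_dist_of_mem_cyclicProgression hb hkb s)

theorem mul_le_error_of_isL2Contraction (hb : 0 < b) (hkb : k * b ≤ n)
    {A B C M : Matrix (Fin n) (Fin n) ℝ} (hBC : B * C = A) (hC : ∀ i j, 0 ≤ (Cᵀ * C) i j)
    (hM : IsL2Contraction M) {c : ℝ} (hc : n * c ≤ ∑ i, ∑ j, M i j * A i j) :
    √k * c ≤ 1 / √n * sens n b k C * frob n B := by
  have hpair : n * c ≤ frob n B * frob n C :=
    hc.trans (hBC ▸ sum_mul_mul_le_frob_mul_frob hM B C)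
  have hsens := sqrt_mul_frob_le_sqrt_mul_sens hb hkb hC
  have hn : 0 < √n := Real.sqrt_pos.mpr (Nat.cast_pos.mpr (NeZero.pos n))
  rw [one_div_mul_eq_div, div_mul_eq_mul_div, le_div_iff₀ hn]
  refine le_of_mul_le_mul_right ?_ hn
  calc √k * c * √n * √n = √k * (n * c) := by
        rw [mul_assoc _ √n, Real.mul_self_sqrt (Nat.cast_nonneg n)]; ring
    _ ≤ √k * (frob n B * frob n C) := by gcongr
    _ = frob n B * (√k * frob n C) := by ring
    _ ≤ frob n B * (√n * sens n b k C) := mul_le_mul_of_nonneg_left hsens (frob_nonneg B)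
    _ = sens n b k C * frob n B * √n := by ring

end Sensitivity

theorem Amat_apply_self {n : ℕ} (α β : ℝ) (i : Fin n) : Amat n α β i i = 1 := by
  simp [Amat, aCoef]

theorem sum_one_mul_Amat (n : ℕ) (α β : ℝ) :
    ∑ i, ∑ j, (1 : Matrix (Fin n) (Fin n) ℝ) i j * Amat n α β i j = n := by
  simp [one_apply, Amat_apply_self]

theorem one_le_aCoef_one {β : ℝ} (hβ : 0 ≤ β) (m : ℕ) : 1 ≤ aCoef 1 β m := by
  simpa [aCoef] using single_le_sum (f := fun t => (1 : ℝ) ^ t * β ^ (m - t))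
    (fun t _ => by positivity) (self_mem_range_succ m)

theorem one_add_log_le_sum_inv_add_half (m : ℕ) :
    1 + log (m + 2) ≤ ∑ d ∈ range (m + 1), ((d : ℝ) + 1 / 2)⁻¹ := by
  induction m with
  | zero =>
    norm_num
    linarith [log_two_lt_d9]
  | succ m ih =>
    have hstep : log (m + 3) - log (m + 2) ≤ ((m : ℝ) + 3 / 2)⁻¹ := by
      rw [← log_div (by positivity) (by positivity)]
      refine (log_le_sub_one_of_pos (by positivity)).trans ?_
      rw [div_sub_one (by positivity), show (m : ℝ) + 3 - (m + 2) = 1 by ring, one_div]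
      gcongr
      linarith
    rw [sum_range_succ]
    push_cast
    rw [show (m : ℝ) + 1 + 2 = m + 3 by ring, show (m : ℝ) + 1 + 1 / 2 = m + 3 / 2 by ring]
    linarith

theorem mul_log_le_sum_one_add_log (n : ℕ) :
    n * log (n + 1) ≤ ∑ m ∈ range n, (1 + log (m + 2)) := by
  induction n with
  | zero => simp
  | succ n ih =>
    have hstep : n * (log (n + 2) - log (n + 1)) ≤ 1 := by
      rw [← log_div (by positivity) (by positivity)]
      calc n * log ((n + 2) / (n + 1)) ≤ n * ((n + 2) / (n + 1) - 1) := by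
            gcongr; exact log_le_sub_one_of_pos (by positivity)
        _ = n / (n + 1) := by field_simp; ring
        _ ≤ 1 := by rw [div_le_one (by positivity)]; linarith
    rw [sum_range_succ]
    push_cast
    rw [show (n : ℝ) + 1 + 1 = n + 2 by ring]
    linarith

theorem sum_sum_ite_le_eq_sum_sum_range (f : ℕ → ℝ) (n : ℕ) :
    ∑ i : Fin n, ∑ j : Fin n, (if (j : ℕ) ≤ i then f (i - j) else 0) =
      ∑ m ∈ range n, ∑ d ∈ range (m + 1), f d := by
  rw [Fin.sum_univ_eq_sum_range (fun i => ∑ j : Fin n, if (j : ℕ) ≤ i then f (i - j) else 0)]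
  refine sum_congr rfl fun m hm => ?_
  rw [Fin.sum_univ_eq_sum_range (fun j => if j ≤ m then f (m - j) else 0), ← sum_filter,
    ← sum_range_reflect f (m + 1)]
  congr 1
  ext j
  simp only [mem_filter, mem_range] at hm ⊢
  omega

theorem mul_log_div_pi_le_sum_hilbertMatrix_mul_Amat (n : ℕ) {β : ℝ} (hβ : 0 ≤ β) :
    n * (log (n + 1) / π) ≤ ∑ i, ∑ j, hilbertMatrix n i j * Amat n 1 β i j := by
  have hentry (i j : Fin n) :
      (if (j : ℕ) ≤ i then hilbertKernel ((i - j : ℕ) : ℤ) else 0) ≤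
        hilbertMatrix n i j * Amat n 1 β i j := by
    by_cases hji : (j : ℕ) ≤ i
    · have hM : hilbertMatrix n i j = hilbertKernel ((i - j : ℕ) : ℤ) := by
        simp [hilbertMatrix, Nat.cast_sub hji]
      rw [if_pos hji, hM]
      refine le_mul_of_one_le_right (hilbertKernel.nonneg_of_nonneg (Nat.cast_nonneg _)) ?_
      simpa only [Amat, of_apply, if_pos hji] using one_le_aCoef_one hβ (i - j)
    · simp only [Amat, of_apply, if_neg hji, mul_zero, le_refl]
  calc n * (log (n + 1) / π) = π⁻¹ * (n * log (n + 1)) := by ring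
    _ ≤ π⁻¹ * ∑ m ∈ range n, ∑ d ∈ range (m + 1), ((d : ℝ) + 1 / 2)⁻¹ := by
        gcongr
        exact (mul_log_le_sum_one_add_log n).trans
          (sum_le_sum fun m _ => one_add_log_le_sum_inv_add_half m)
    _ = ∑ i : Fin n, ∑ j : Fin n,
          (if (j : ℕ) ≤ i then hilbertKernel ((i - j : ℕ) : ℤ) else 0) := by
        rw [sum_sum_ite_le_eq_sum_sum_range (fun d => hilbertKernel d), mul_sum]
        simp only [hilbertKernel.natCast, mul_sum]
    _ ≤ ∑ i, ∑ j, hilbertMatrix n i j * Amat n 1 β i j :=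
        sum_le_sum fun i _ => sum_le_sum fun j _ => hentry i j

theorem approximation_error_lower_bound_general (n b k : ℕ) (hn : 1 ≤ n)
    (hb : 1 ≤ b) (hkn : k ≤ n / b)
    (α β : ℝ) (hβ : 0 ≤ β)
    (B C : Matrix (Fin n) (Fin n) ℝ) (hBC : B * C = Amat n α β)
    (hC : ∀ i j, 0 ≤ (Cᵀ * C) i j) :
    (α = 1 →
      Real.sqrt k * Real.log (n + 1) / Real.pi ≤
        (1 / Real.sqrt n) * sens n b k C * frob n B) ∧
    (α < 1 →
      Real.sqrt k ≤ (1 / Real.sqrt n) * sens n b k C * frob n B) := by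
  have : NeZero n := ⟨by omega⟩
  have hkb : k * b ≤ n := (Nat.le_div_iff_mul_le hb).mp hkn
  refine ⟨fun hα => ?_, fun _ => ?_⟩
  · subst hα
    rw [mul_div_assoc]
    exact mul_le_error_of_isL2Contraction hb hkb hBC hC (isL2Contraction_hilbertMatrix n)
      (mul_log_div_pi_le_sum_hilbertMatrix_mul_Amat n hβ)
  · simpa using mul_le_error_of_isL2Contraction hb hkb hBC hC isL2Contraction_one (c := 1)
      (by rw [sum_one_mul_Amat, mul_one])

/-- lower bound on the expected approximation error of any factorization
`A_{α,β} = B·C` with `CᵀC` entrywise nonnegative. -/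
theorem approximation_error_lower_bound (n b k : ℕ) (hn : 1 ≤ n)
    (hb : 1 ≤ b) (hbn : b ≤ n) (hk : 1 ≤ k) (hkn : k ≤ n / b)
    (α β : ℝ) (hβ : 0 ≤ β) (hβα : β < α) (hα : α ≤ 1)
    (B C : Matrix (Fin n) (Fin n) ℝ) (hBC : B * C = Amat n α β)
    (hC : ∀ i j, 0 ≤ (Cᵀ * C) i j) :
    (α = 1 →
      Real.sqrt k * Real.log (n + 1) / Real.pi ≤
        (1 / Real.sqrt n) * sens n b k C * frob n B) ∧
    (α < 1 →
      Real.sqrt k ≤ (1 / Real.sqrt n) * sens n b k C * frob n B) :=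
  approximation_error_lower_bound_general n b k hn hb hkn α β hβ B C hBC hC
end
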